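/- Let u, v, w be positive integers with gcd(u,v) = 1, u, v ≥ 2, w > 1, and let b ≥ 1. Let S = {1, u, v, uvw} and let (S) and (S^b) be the 4×4 matrices with entries gcd(x_i,x_j) and gcd(x_i,x_j)^b respectively (x_1 = 1, x_2 = u, x_3 = v, x_4 = uvw). Then (S)^{-1}(S^b) has integer entries if and only if Δ_1 := uvw - u - v + 1 divides Δ_b := (uvw)^b - u^b - v^b + 1. -/

import Mathlib

/-!
Both `(S)` and `(S^b)` factor as `Lᵀ Λ L`, where `L` is the 0/1 incidence matrix of divisibility
on `1 ∣ u, v ∣ uvw` (unimodular over `ℤ`) and `Λ` is diagonal: `diag (1, u - 1, v - 1, Δ₁)`,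
resp. `diag (1, u^b - 1, v^b - 1, Δ_b)`. Hence `(S)⁻¹ (S^b) = L⁻¹ (Λ⁻¹ Λ_b) L` is integral iff
`Λ⁻¹ Λ_b` is, i.e. iff `u - 1 ∣ u^b - 1`, `v - 1 ∣ v^b - 1` and `Δ₁ ∣ Δ_b`; the first two always hold.
-/

open Matrix

section IntegerMatrices

variable (n K : Type*) [Fintype n] [DecidableEq n] [CommRing K]

def integerMatrices : Subring (Matrix n n K) := (Int.castRingHom K).mapMatrix.range

variable {n K}

theorem mem_integerMatrices_iff {A : Matrix n n K} :
    A ∈ integerMatrices n K ↔ ∀ i j, ∃ m : ℤ, A i j = m := by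
  constructor
  · rintro ⟨B, rfl⟩ i j
    exact ⟨B i j, rfl⟩
  · intro h
    choose B hB using h
    exact ⟨Matrix.of B, ext fun i j => (hB i j).symm⟩

theorem diagonal_mem_integerMatrices_iff {d : n → K} :
    diagonal d ∈ integerMatrices n K ↔ ∀ i, ∃ m : ℤ, d i = m := by
  rw [mem_integerMatrices_iff]
  refine ⟨fun h i => by simpa using h i i, fun h i j => ?_⟩
  by_cases hij : i = j
  · subst hij
    simpa using h i
  · exact ⟨0, by simp [hij]⟩

theorem isUnit_det_map_intCast {L : Matrix n n ℤ} (hL : IsUnit L.det) :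
    IsUnit (L.map (Int.cast : ℤ → K)).det := by
  have h := (Int.castRingHom K).map_det L
  rw [RingHom.mapMatrix_apply, Int.coe_castRingHom] at h
  exact h ▸ hL.map (Int.castRingHom K)

theorem inv_map_intCast {L : Matrix n n ℤ} (hL : IsUnit L.det) :
    (L.map (Int.cast : ℤ → K))⁻¹ = L⁻¹.map Int.cast := by
  apply inv_eq_right_inv
  have h := Matrix.map_mul (L := L) (M := L⁻¹) (f := Int.castRingHom K)
  rw [Int.coe_castRingHom] at h
  rw [← h, mul_nonsing_inv L hL]
  exact Matrix.map_one _ Int.cast_zero Int.cast_one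

theorem inv_mul_mul_mem_integerMatrices_iff {L : Matrix n n ℤ} (hL : IsUnit L.det)
    {A : Matrix n n K} :
    (L.map Int.cast)⁻¹ * A * L.map Int.cast ∈ integerMatrices n K ↔ A ∈ integerMatrices n K := by
  have hP : L.map (Int.cast : ℤ → K) ∈ integerMatrices n K := ⟨L, rfl⟩
  have hP' : L⁻¹.map (Int.cast : ℤ → K) ∈ integerMatrices n K := ⟨L⁻¹, rfl⟩
  have hdet := isUnit_det_map_intCast (K := K) hL
  have hA : A = L.map Int.cast * ((L.map Int.cast)⁻¹ * A * L.map Int.cast) * L⁻¹.map Int.cast := by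
    rw [← inv_map_intCast (K := K) hL, Matrix.mul_assoc, mul_nonsing_inv_cancel_right _ _ hdet,
      mul_nonsing_inv_cancel_left _ _ hdet]
  constructor
  · intro h
    rw [hA]
    exact mul_mem (mul_mem hP h) hP'
  · intro h
    rw [inv_map_intCast hL]
    exact mul_mem (mul_mem hP' h) hP

end IntegerMatrices

theorem inv_mul_eq_conj_inv_mul {n K : Type*} [Fintype n] [DecidableEq n] [CommRing K]
    (P Q D D' : Matrix n n K) (hQ : IsUnit Q.det) :
    (Q * D * P)⁻¹ * (Q * D' * P) = P⁻¹ * (D⁻¹ * D') * P := by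
  rw [Matrix.mul_inv_rev, Matrix.mul_inv_rev]
  simp only [Matrix.mul_assoc, nonsing_inv_mul_cancel_left _ _ hQ]

theorem diagonal_inv_mul_diagonal {n K : Type*} [Fintype n] [DecidableEq n] [Field K]
    {d : n → K} (hd : ∀ i, d i ≠ 0) (d' : n → K) :
    (diagonal d)⁻¹ * diagonal d' = diagonal fun i => d' i / d i := by
  rw [inv_eq_left_inv (B := diagonal d⁻¹), diagonal_mul_diagonal]
  · simp [div_eq_inv_mul]
  · rw [diagonal_mul_diagonal]
    simp [hd]

theorem exists_intCast_div_eq_iff_dvd {K : Type*} [Field K] [CharZero K] {a c : ℤ} (hc : c ≠ 0) :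
    (∃ m : ℤ, (a / c : K) = m) ↔ c ∣ a := by
  constructor
  · rintro ⟨m, hm⟩
    refine ⟨m, ?_⟩
    rw [div_eq_iff (by exact_mod_cast hc)] at hm
    exact_mod_cast hm.trans (mul_comm _ _)
  · rintro ⟨m, rfl⟩
    exact ⟨m, by push_cast; field_simp⟩

def gcdMatrix {R : Type*} [One R] (a b d : R) : Matrix (Fin 4) (Fin 4) R :=
  !![1, 1, 1, 1; 1, a, 1, a; 1, 1, b, b; 1, a, b, d]

/-- `divisibilityMatrix i j = 1` iff `x i ∣ x j`, for `x = ![1, u, v, u * v * w]`. -/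
def divisibilityMatrix : Matrix (Fin 4) (Fin 4) ℤ :=
  !![1, 1, 1, 1; 0, 1, 0, 1; 0, 0, 1, 1; 0, 0, 0, 1]

theorem det_divisibilityMatrix : divisibilityMatrix.det = 1 := by
  simp [divisibilityMatrix, det_succ_row_zero, Fin.sum_univ_succ]

theorem of_comp_gcd_eq_gcdMatrix {a b d : ℕ} (hab : Nat.gcd a b = 1) (had : a ∣ d) (hbd : b ∣ d)
    {R : Type*} [One R] (f : ℕ → R) (hf : f 1 = 1) :
    Matrix.of (fun i j => f (Nat.gcd (![1, a, b, d] i) (![1, a, b, d] j))) =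
      gcdMatrix (f a) (f b) (f d) := by
  ext i j
  fin_cases i <;> fin_cases j <;>
    simp [gcdMatrix, hf, hab, Nat.gcd_comm b a, Nat.gcd_eq_left had, Nat.gcd_eq_left hbd,
      Nat.gcd_eq_right had, Nat.gcd_eq_right hbd]

theorem gcdMatrix_eq_transpose_mul_diagonal_mul {R : Type*} [CommRing R] (a b d : R) :
    gcdMatrix a b d = (divisibilityMatrix.map Int.cast)ᵀ *
      diagonal ![1, a - 1, b - 1, d - a - b + 1] * divisibilityMatrix.map Int.cast := by
  ext i j
  fin_cases i <;> fin_cases j <;> simp [gcdMatrix, divisibilityMatrix, mul_apply, Fin.sum_univ_four]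
  all_goals ring

theorem gcdMatrix_inv_mul_gcdMatrix_mem_integerMatrices_iff {K : Type*} [Field K]
    {a b d : K} (ha : a - 1 ≠ 0) (hb : b - 1 ≠ 0) (hd : d - a - b + 1 ≠ 0) (a' b' d' : K) :
    (gcdMatrix a b d)⁻¹ * gcdMatrix a' b' d' ∈ integerMatrices (Fin 4) K ↔
      (∃ m : ℤ, (a' - 1) / (a - 1) = m) ∧ (∃ m : ℤ, (b' - 1) / (b - 1) = m) ∧
        ∃ m : ℤ, (d' - a' - b' + 1) / (d - a - b + 1) = m := by
  have hL : IsUnit divisibilityMatrix.det := by simp [det_divisibilityMatrix]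
  have hΛ : ∀ i, ![1, a - 1, b - 1, d - a - b + 1] i ≠ 0 := by
    simp only [Fin.forall_fin_succ, cons_val_zero, cons_val_succ, cons_val_fin_one, forall_const]
    exact ⟨one_ne_zero, ha, hb, hd⟩
  rw [gcdMatrix_eq_transpose_mul_diagonal_mul, gcdMatrix_eq_transpose_mul_diagonal_mul,
    inv_mul_eq_conj_inv_mul _ _ _ _ (by rw [det_transpose]; exact isUnit_det_map_intCast hL),
    diagonal_inv_mul_diagonal hΛ, inv_mul_mul_mem_integerMatrices_iff hL,
    diagonal_mem_integerMatrices_iff]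
  simp only [Fin.forall_fin_succ, cons_val_zero, cons_val_succ, cons_val_fin_one, forall_const,
    div_one]
  exact ⟨fun h => h.2, fun h => ⟨⟨1, Int.cast_one.symm⟩, h⟩⟩

theorem mul_mul_sub_sub_add_one_ne_zero {u v : ℕ} (hu : 2 ≤ u) (hv : 2 ≤ v) (w : ℕ) :
    (u : ℤ) * v * w - u - v + 1 ≠ 0 := by
  rcases w with _ | w
  · omega
  · have h1 : 1 ≤ ((u : ℤ) - 1) * (v - 1) := one_le_mul_of_one_le_of_one_le (by omega) (by omega)
    have h2 : 0 ≤ (u : ℤ) * v * w := by positivity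
    push_cast
    nlinarith

theorem stmt_18_general (u v w b : ℕ) (hu : 2 ≤ u) (hv : 2 ≤ v)
    (huv : Nat.gcd u v = 1)
    (x : Fin 4 → ℕ) (hx : x = ![1, u, v, u * v * w]) :
    (∀ i j : Fin 4,
        ∃ m : ℤ,
          ((Matrix.of fun i j : Fin 4 => ((Nat.gcd (x i) (x j) : ℚ)))⁻¹ *
            (Matrix.of fun i j : Fin 4 => ((Nat.gcd (x i) (x j) : ℚ)) ^ b)) i j = (m : ℚ)) ↔
      ((u : ℤ) * v * w - u - v + 1) ∣ (((u : ℤ) * v * w) ^ b - (u : ℤ) ^ b - (v : ℤ) ^ b + 1) := by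
  subst hx
  have hud : u ∣ u * v * w := ⟨v * w, by ring⟩
  have hvd : v ∣ u * v * w := ⟨u * w, by ring⟩
  have hu1 : (u : ℤ) - 1 ≠ 0 := by omega
  have hv1 : (v : ℤ) - 1 ≠ 0 := by omega
  have hΔ := mul_mul_sub_sub_add_one_ne_zero hu hv w
  have hu_ratio := (exists_intCast_div_eq_iff_dvd (K := ℚ) hu1).2 (sub_one_dvd_pow_sub_one _ b)
  have hv_ratio := (exists_intCast_div_eq_iff_dvd (K := ℚ) hv1).2 (sub_one_dvd_pow_sub_one _ b)
  have hΔ_ratio := exists_intCast_div_eq_iff_dvd (K := ℚ)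
    (a := ((u : ℤ) * v * w) ^ b - u ^ b - v ^ b + 1) hΔ
  push_cast at hu_ratio hv_ratio hΔ_ratio
  rw [of_comp_gcd_eq_gcdMatrix huv hud hvd Nat.cast Nat.cast_one,
    of_comp_gcd_eq_gcdMatrix huv hud hvd (fun t => (t : ℚ) ^ b) (by simp),
    ← mem_integerMatrices_iff, gcdMatrix_inv_mul_gcdMatrix_mem_integerMatrices_iff
      (by exact_mod_cast hu1) (by exact_mod_cast hv1) (by exact_mod_cast hΔ),
    ← hΔ_ratio]
  push_cast
  exact ⟨fun h => h.2.2, fun h => ⟨hu_ratio, hv_ratio, h⟩⟩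

theorem stmt_18 (u v w b : ℕ) (hu : 2 ≤ u) (hv : 2 ≤ v) (hw : 1 < w) (hb : 1 ≤ b)
    (huv : Nat.gcd u v = 1)
    (x : Fin 4 → ℕ) (hx : x = ![1, u, v, u * v * w]) :
    (∀ i j : Fin 4,
        ∃ m : ℤ,
          ((Matrix.of fun i j : Fin 4 => ((Nat.gcd (x i) (x j) : ℚ)))⁻¹ *
            (Matrix.of fun i j : Fin 4 => ((Nat.gcd (x i) (x j) : ℚ)) ^ b)) i j = (m : ℚ)) ↔
      ((u : ℤ) * v * w - u - v + 1) ∣ (((u : ℤ) * v * w) ^ b - (u : ℤ) ^ b - (v : ℤ) ^ b + 1) :=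
  stmt_18_general u v w b hu hv huv x hx
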